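/- Let R be a ring with identity such that APOG(R) ≠ ∅. Then R is a left and right Noetherian ring if and only if the vertex set of APOG(R) satisfies the ascending chain condition both on its elements that are left ideals of R and on its elements that are right ideals of R. -/

import Mathlib

open scoped Pointwise

/-- `I` is a left ideal of the ring `R`: an additive subgroup with `R·I ⊆ I`. -/
def IsLeftIdeal (R : Type*) [Ring R] (I : AddSubgroup R) : Prop :=
  ∀ r : R, ∀ x ∈ I, r * x ∈ I

/-- `I` is a right ideal of the ring `R`: an additive subgroup with `I·R ⊆ I`. -/
def IsRightIdeal (R : Type*) [Ring R] (I : AddSubgroup R) : Prop :=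
  ∀ r : R, ∀ x ∈ I, x * r ∈ I

/-- `I` is a one-sided (left or right) ideal of `R`. -/
def IsOneSidedIdeal (R : Type*) [Ring R] (I : AddSubgroup R) : Prop :=
  IsLeftIdeal R I ∨ IsRightIdeal R I

/-- `IPO(R)`: the set of all products `I*J` of two one-sided ideals of `R`.
Here `I * J` is the additive subgroup generated by `{a*b : a ∈ I, b ∈ J}`
(the pointwise product of additive subgroups). -/
def IPO (R : Type*) [Ring R] : Set (AddSubgroup R) :=
  {A | ∃ I J : AddSubgroup R, IsOneSidedIdeal R I ∧ IsOneSidedIdeal R J ∧ A = I * J}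

/-- `A` is a vertex of `APOG(R) = Γ(IPO(R))`: a nonzero element of `IPO(R)` that is a
one-sided zero-divisor of the semigroup `IPO(R)`. -/
def APOGVertex (R : Type*) [Ring R] (A : AddSubgroup R) : Prop :=
  A ∈ IPO R ∧ A ≠ ⊥ ∧ ∃ B ∈ IPO R, B ≠ ⊥ ∧ (A * B = ⊥ ∨ B * A = ⊥)

/-- The directed edge `A → B` of `APOG(R)`: both are vertices, `A ≠ B` and `A*B = 0`. -/
def APOGEdge (R : Type*) [Ring R] (A B : AddSubgroup R) : Prop :=
  APOGVertex R A ∧ APOGVertex R B ∧ A ≠ B ∧ A * B = ⊥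

/-- A family `T` of additive subgroups satisfies the descending chain condition. -/
def DCCOn (R : Type*) [Ring R] (T : Set (AddSubgroup R)) : Prop :=
  ∀ f : ℕ → AddSubgroup R, (∀ n, f n ∈ T) → (∀ n, f (n + 1) ≤ f n) →
    ∃ N, ∀ n, N ≤ n → f n = f N

/-- A family `T` of additive subgroups satisfies the ascending chain condition. -/
def ACCOn (R : Type*) [Ring R] (T : Set (AddSubgroup R)) : Prop :=
  ∀ f : ℕ → AddSubgroup R, (∀ n, f n ∈ T) → (∀ n, f n ≤ f (n + 1)) →
    ∃ N, ∀ n, N ≤ n → f n = f N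

/-!
A vertex yields nonzero `x, y ∈ R` with `x * y = 0`. For a left ideal `J`, both
`J ∩ {r | r * x = 0}` and `J * x` are left ideals, and when nonzero they are vertices: the first
is annihilated on the right by the right ideal `xR`, the second by `yR`. An ascending chain of
left ideals `Jₙ` is recovered from these two chains: with `K` the kernel of `r ↦ r * x`, the
image `Jₙ * x` determines `Jₙ + K`, and in the modular lattice of additive subgroups
`J ≤ J'`, `J ∩ K = J' ∩ K`, `J + K = J' + K` force `J = J'`. Right ideals are symmetric,
with `r ↦ y * r`.
-/

namespace AddSubgroup

variable {R : Type*} [Ring R]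

lemma mul_mem_mul {A B : AddSubgroup R} {a b : R} (ha : a ∈ A) (hb : b ∈ B) : a * b ∈ A * B :=
  AddSubmonoid.mul_mem_mul ha hb

lemma mul_le {A B C : AddSubgroup R} : A * B ≤ C ↔ ∀ a ∈ A, ∀ b ∈ B, a * b ∈ C :=
  AddSubmonoid.mul_le

lemma mul_eq_bot_iff {A B : AddSubgroup R} : A * B = ⊥ ↔ ∀ a ∈ A, ∀ b ∈ B, a * b = 0 := by
  simp only [eq_bot_iff, mul_le, mem_bot]

end AddSubgroup

open AddSubgroup

section ChainConditions

variable {R : Type*} [Ring R]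

lemma ACCOn.mono {S T : Set (AddSubgroup R)} (hT : ACCOn R T) (hST : S ⊆ T) : ACCOn R S :=
  fun f hf hmono => hT f (fun n => hST (hf n)) hmono

lemma ACCOn.insert_bot {T : Set (AddSubgroup R)} (hT : ACCOn R T) : ACCOn R (insert ⊥ T) := by
  intro f hf hmono
  have hf_mono : Monotone f := monotone_nat_of_le_succ hmono
  by_cases hbot : ∀ n, f n = ⊥
  · exact ⟨0, fun n _ => (hbot n).trans (hbot 0).symm⟩
  push Not at hbot
  obtain ⟨m, hm⟩ := hbot
  have hmem : ∀ n, f (m + n) ∈ T := fun n =>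
    (hf (m + n)).resolve_left fun h => hm (le_bot_iff.1 (h ▸ hf_mono (Nat.le_add_right m n)))
  obtain ⟨N, hN⟩ := hT (fun n => f (m + n)) hmem fun n => hmono (m + n)
  refine ⟨m + N, fun n hn => ?_⟩
  simpa [Nat.add_sub_cancel' (show m ≤ n by omega)] using hN (n - m) (by omega)

lemma ACCOn.of_inf_ker_of_map {S T : Set (AddSubgroup R)} (φ : R →+ R) (hS : ACCOn R S)
    (hker : ∀ J ∈ T, J ⊓ φ.ker ∈ S) (hmap : ∀ J ∈ T, J.map φ ∈ S) : ACCOn R T := by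
  intro f hf hmono
  have hf_mono : Monotone f := monotone_nat_of_le_succ hmono
  obtain ⟨N₁, hN₁⟩ := hS (fun n => f n ⊓ φ.ker) (fun n => hker _ (hf n))
    fun n => inf_le_inf_right _ (hmono n)
  obtain ⟨N₂, hN₂⟩ := hS (fun n => (f n).map φ) (fun n => hmap _ (hf n))
    fun n => map_mono (hmono n)
  refine ⟨max N₁ N₂, fun n hn =>
    (eq_of_le_of_inf_le_of_sup_le (z := φ.ker) (hf_mono hn) ?_ ?_).symm⟩
  · exact ((hN₁ n (by omega)).trans (hN₁ _ (by omega)).symm).le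
  · exact (map_eq_map_iff.1 ((hN₂ n (by omega)).trans (hN₂ _ (by omega)).symm)).le

end ChainConditions

section Vertices

variable {R : Type*} [Ring R]

lemma IsLeftIdeal.top_mul_eq {J : AddSubgroup R} (hJ : IsLeftIdeal R J) : ⊤ * J = J :=
  le_antisymm (mul_le.2 fun r _ j hj => hJ r j hj)
    fun j hj => by simpa using mul_mem_mul (mem_top 1) hj

lemma IsRightIdeal.mul_top_eq {J : AddSubgroup R} (hJ : IsRightIdeal R J) : J * ⊤ = J :=
  le_antisymm (mul_le.2 fun j hj r _ => hJ r j hj)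
    fun j hj => by simpa using mul_mem_mul hj (mem_top 1)

lemma IsLeftIdeal.mem_IPO {J : AddSubgroup R} (hJ : IsLeftIdeal R J) : J ∈ IPO R :=
  ⟨⊤, J, Or.inl fun _ _ _ => trivial, Or.inl hJ, hJ.top_mul_eq.symm⟩

lemma IsRightIdeal.mem_IPO {J : AddSubgroup R} (hJ : IsRightIdeal R J) : J ∈ IPO R :=
  ⟨J, ⊤, Or.inr hJ, Or.inr fun _ _ _ => trivial, hJ.mul_top_eq.symm⟩

lemma isRightIdeal_range_mulLeft (x : R) : IsRightIdeal R (AddMonoidHom.mulLeft x).range := by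
  rintro r _ ⟨s, rfl⟩
  exact ⟨s * r, (mul_assoc x s r).symm⟩

lemma isLeftIdeal_range_mulRight (x : R) : IsLeftIdeal R (AddMonoidHom.mulRight x).range := by
  rintro r _ ⟨s, rfl⟩
  exact ⟨r * s, mul_assoc r s x⟩

lemma range_mulLeft_ne_bot {x : R} (hx : x ≠ 0) : (AddMonoidHom.mulLeft x).range ≠ ⊥ :=
  fun h => hx <| mem_bot.1 <| h ▸ ⟨1, mul_one x⟩

lemma range_mulRight_ne_bot {x : R} (hx : x ≠ 0) : (AddMonoidHom.mulRight x).range ≠ ⊥ :=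
  fun h => hx <| mem_bot.1 <| h ▸ ⟨1, one_mul x⟩

lemma apogVertex_of_isLeftIdeal {J : AddSubgroup R} (hJ : IsLeftIdeal R J) (hJ₀ : J ≠ ⊥)
    {x : R} (hx : x ≠ 0) (hJx : ∀ j ∈ J, j * x = 0) : APOGVertex R J := by
  refine ⟨hJ.mem_IPO, hJ₀, _, (isRightIdeal_range_mulLeft x).mem_IPO, range_mulLeft_ne_bot hx,
    Or.inl (mul_eq_bot_iff.2 ?_)⟩
  rintro j hj _ ⟨s, rfl⟩
  simp [← mul_assoc, hJx j hj]

lemma apogVertex_of_isRightIdeal {J : AddSubgroup R} (hJ : IsRightIdeal R J) (hJ₀ : J ≠ ⊥)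
    {x : R} (hx : x ≠ 0) (hxJ : ∀ j ∈ J, x * j = 0) : APOGVertex R J := by
  refine ⟨hJ.mem_IPO, hJ₀, _, (isLeftIdeal_range_mulRight x).mem_IPO, range_mulRight_ne_bot hx,
    Or.inr (mul_eq_bot_iff.2 ?_)⟩
  rintro _ ⟨s, rfl⟩ j hj
  simp [mul_assoc, hxJ j hj]

lemma exists_mul_eq_zero_of_apogVertex {A : AddSubgroup R} (hA : APOGVertex R A) :
    ∃ x y : R, x ≠ 0 ∧ y ≠ 0 ∧ x * y = 0 := by
  obtain ⟨-, hA₀, B, -, hB₀, hAB⟩ := hA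
  obtain ⟨a, ha, ha₀⟩ := A.bot_or_exists_ne_zero.resolve_left hA₀
  obtain ⟨b, hb, hb₀⟩ := B.bot_or_exists_ne_zero.resolve_left hB₀
  rcases hAB with h | h
  · exact ⟨a, b, ha₀, hb₀, mul_eq_bot_iff.1 h a ha b hb⟩
  · exact ⟨b, a, hb₀, ha₀, mul_eq_bot_iff.1 h b hb a ha⟩

end Vertices

section Transfer

variable {R : Type*} [Ring R] {x y : R}

lemma IsLeftIdeal.inf_ker_mulRight {J : AddSubgroup R} (hJ : IsLeftIdeal R J) (x : R) :
    IsLeftIdeal R (J ⊓ (AddMonoidHom.mulRight x).ker) := by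
  rintro r j ⟨hj, hjx⟩
  refine ⟨hJ r j hj, ?_⟩
  simp_all [mul_assoc]

lemma IsLeftIdeal.map_mulRight {J : AddSubgroup R} (hJ : IsLeftIdeal R J) (x : R) :
    IsLeftIdeal R (J.map (AddMonoidHom.mulRight x)) := by
  rintro r _ ⟨j, hj, rfl⟩
  exact ⟨r * j, hJ r j hj, mul_assoc r j x⟩

lemma IsRightIdeal.inf_ker_mulLeft {J : AddSubgroup R} (hJ : IsRightIdeal R J) (y : R) :
    IsRightIdeal R (J ⊓ (AddMonoidHom.mulLeft y).ker) := by
  rintro r j ⟨hj, hyj⟩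
  refine ⟨hJ r j hj, ?_⟩
  simp_all [← mul_assoc]

lemma IsRightIdeal.map_mulLeft {J : AddSubgroup R} (hJ : IsRightIdeal R J) (y : R) :
    IsRightIdeal R (J.map (AddMonoidHom.mulLeft y)) := by
  rintro r _ ⟨j, hj, rfl⟩
  exact ⟨j * r, hJ r j hj, (mul_assoc y j r).symm⟩

lemma accOn_isLeftIdeal (hx : x ≠ 0) (hy : y ≠ 0) (hxy : x * y = 0)
    (hacc : ACCOn R {A | APOGVertex R A ∧ IsLeftIdeal R A}) :
    ACCOn R {J | IsLeftIdeal R J} := by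
  have hvertex : ∀ {J : AddSubgroup R} {z : R}, IsLeftIdeal R J → z ≠ 0 → (∀ j ∈ J, j * z = 0) →
      J ∈ insert ⊥ {A | APOGVertex R A ∧ IsLeftIdeal R A} := fun hJ hz hJz =>
    or_iff_not_imp_left.2 fun hJ₀ => ⟨apogVertex_of_isLeftIdeal hJ hJ₀ hz hJz, hJ⟩
  refine hacc.insert_bot.of_inf_ker_of_map (AddMonoidHom.mulRight x) ?_ ?_
  · exact fun J hJ => hvertex (hJ.inf_ker_mulRight x) hx fun j hj => hj.2
  · refine fun J hJ => hvertex (hJ.map_mulRight x) hy ?_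
    rintro _ ⟨j, -, rfl⟩
    simp [mul_assoc, hxy]

lemma accOn_isRightIdeal (hx : x ≠ 0) (hy : y ≠ 0) (hxy : x * y = 0)
    (hacc : ACCOn R {A | APOGVertex R A ∧ IsRightIdeal R A}) :
    ACCOn R {J | IsRightIdeal R J} := by
  have hvertex : ∀ {J : AddSubgroup R} {z : R}, IsRightIdeal R J → z ≠ 0 →
      (∀ j ∈ J, z * j = 0) → J ∈ insert ⊥ {A | APOGVertex R A ∧ IsRightIdeal R A} :=
    fun hJ hz hzJ =>
      or_iff_not_imp_left.2 fun hJ₀ => ⟨apogVertex_of_isRightIdeal hJ hJ₀ hz hzJ, hJ⟩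
  refine hacc.insert_bot.of_inf_ker_of_map (AddMonoidHom.mulLeft y) ?_ ?_
  · exact fun J hJ => hvertex (hJ.inf_ker_mulLeft y) hy fun j hj => hj.2
  · refine fun J hJ => hvertex (hJ.map_mulLeft y) hx ?_
    rintro _ ⟨j, -, rfl⟩
    simp [← mul_assoc, hxy]

end Transfer

/-- Suppose `APOG(R) ≠ ∅`.  Then `R` is left and right Noetherian iff
the vertex set of `APOG(R)` has ACC both on its members that are left ideals and on its
members that are right ideals. -/
theorem noetherian_iff_vertexSet_acc (R : Type*) [Ring R]
    (hne : ∃ A : AddSubgroup R, APOGVertex R A) :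
    (ACCOn R {J | IsLeftIdeal R J} ∧ ACCOn R {J | IsRightIdeal R J}) ↔
      (ACCOn R {A | APOGVertex R A ∧ IsLeftIdeal R A} ∧
        ACCOn R {A | APOGVertex R A ∧ IsRightIdeal R A}) := by
  refine ⟨fun ⟨hL, hR⟩ => ⟨hL.mono fun _ h => h.2, hR.mono fun _ h => h.2⟩, fun ⟨hL, hR⟩ => ?_⟩
  obtain ⟨A, hA⟩ := hne
  obtain ⟨x, y, hx, hy, hxy⟩ := exists_mul_eq_zero_of_apogVertex hA
  exact ⟨accOn_isLeftIdeal hx hy hxy hL, accOn_isRightIdeal hx hy hxy hR⟩
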